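/- Suppose for each ordered pair (k,j) and each root candidate j, the estimated risks satisfy |R̂*_{jk} − R*_{jk}| < γ/2 and |R̂_j^root − R_j^root| < γ/2, where γ = min(δ_min⁺ − α, α − δ_max⁻) > 0 under the signal-separation condition. Then every true edge satisfies δ̂_{jk} = R̂_j^root − R̂*_{jk} > α and every false edge satisfies δ̂_{jk'} < α; consequently the minimizer of the empirical penalized score Ŝ_n(T;α) equals the true tree T*. -/
import Mathlib


open scoped BigOperators

/-- A directed tree (forest) on `Fin p` is described by a parent map assigning to
each node at most one parent; acyclicity means the relation "`a` is the parent of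
`b`" is well-founded. -/
def IsDirTree {p : ℕ} (π : Fin p → Option (Fin p)) : Prop :=
  WellFounded (fun a b : Fin p => π b = some a)

/-- The empirical penalized score
`Ŝ_n(T;α) = ∑_{(k,j)∈E} R̂*_{jk} + ∑_{roots j} R̂_j^root + α|E|`. -/
noncomputable def empScore {p : ℕ} (Rhatstar : Fin p → Fin p → ℝ)
    (Rhatroot : Fin p → ℝ) (α : ℝ) (π : Fin p → Option (Fin p)) : ℝ :=
  ∑ j, (match π j with | some k => Rhatstar j k + α | none => Rhatroot j)

lemma noSelfLoop {p : ℕ} {π : Fin p → Option (Fin p)} (h : IsDirTree π)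
    (j : Fin p) : π j ≠ some j := fun hc => WellFounded.asymmetric h j j hc hc

/-- Deterministic core of the consistency theorem: if all estimated risks are
within `γ/2` of their population values, where `γ = min(δ_min⁺ − α, α − δ_max⁻) > 0`
is the signal gap under signal separation, then every true edge has estimated
signal `δ̂ > α`, every false edge has `δ̂ < α`, and the true tree `π*` is the
unique minimizer of the empirical penalized score. -/
theorem stmt_19 {p : ℕ} (Rroot Rhatroot : Fin p → ℝ)
    (Rstar Rhatstar : Fin p → Fin p → ℝ)
    (δ : Fin p → Fin p → ℝ) (hδdef : ∀ j k, δ j k = Rroot j - Rstar j k)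
    (α δminp δmaxm γ : ℝ)
    (hsep : δmaxm < α ∧ α < δminp)
    (hγ : γ = min (δminp - α) (α - δmaxm))
    (πstar : Fin p → Option (Fin p)) (hstar : IsDirTree πstar)
    (htrue : ∀ j k, πstar j = some k → δminp ≤ δ j k)
    (hfalse : ∀ j k, k ≠ j → πstar j ≠ some k → δ j k ≤ δmaxm)
    (hest : ∀ j k, |Rhatstar j k - Rstar j k| < γ / 2)
    (hestroot : ∀ j, |Rhatroot j - Rroot j| < γ / 2) :
    (∀ j k, πstar j = some k → α < Rhatroot j - Rhatstar j k) ∧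
    (∀ j k, k ≠ j → πstar j ≠ some k → Rhatroot j - Rhatstar j k < α) ∧
    (∀ π : Fin p → Option (Fin p), IsDirTree π → π ≠ πstar →
      empScore Rhatstar Rhatroot α πstar < empScore Rhatstar Rhatroot α π) := by
  have hγ1 : γ ≤ δminp - α := hγ ▸ min_le_left _ _
  have hγ2 : γ ≤ α - δmaxm := hγ ▸ min_le_right _ _
  have htrue' : ∀ j k, πstar j = some k → α < Rhatroot j - Rhatstar j k := by
    intro j k h
    have h0 := htrue j k h
    have h1 := abs_lt.mp (hest j k)
    have h2 := abs_lt.mp (hestroot j)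
    have h3 := hδdef j k
    linarith [h1.1, h1.2, h2.1, h2.2]
  have hfalse' : ∀ j k, k ≠ j → πstar j ≠ some k →
      Rhatroot j - Rhatstar j k < α := by
    intro j k hkj h
    have h0 := hfalse j k hkj h
    have h1 := abs_lt.mp (hest j k)
    have h2 := abs_lt.mp (hestroot j)
    have h3 := hδdef j k
    linarith [h1.1, h1.2, h2.1, h2.2]
  refine ⟨htrue', hfalse', ?_⟩
  intro π hπ hne
  have key : ∀ j : Fin p, π j ≠ πstar j →
      (match πstar j with | some k => Rhatstar j k + α | none => Rhatroot j)
      < (match π j with | some k => Rhatstar j k + α | none => Rhatroot j) := by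
    intro j hjne
    cases hs : πstar j with
    | some k =>
      have ht := htrue' j k hs
      cases hp : π j with
      | some k' =>
        have hk' : k' ≠ j := fun hc => noSelfLoop hπ j (hc ▸ hp)
        have hne' : πstar j ≠ some k' := fun hc => hjne (hp.trans hc.symm)
        have hf := hfalse' j k' hk' hne'
        show Rhatstar j k + α < Rhatstar j k' + α
        linarith
      | none =>
        show Rhatstar j k + α < Rhatroot j
        linarith
    | none =>
      cases hp : π j with
      | some k' =>
        have hk' : k' ≠ j := fun hc => noSelfLoop hπ j (hc ▸ hp)
        have hne' : πstar j ≠ some k' := by rw [hs]; simp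
        have hf := hfalse' j k' hk' hne'
        show Rhatroot j < Rhatstar j k' + α
        linarith
      | none => exact absurd (hp.trans hs.symm) hjne
  unfold empScore
  obtain ⟨j0, hj0⟩ := Function.ne_iff.mp hne
  refine Finset.sum_lt_sum ?_ ⟨j0, Finset.mem_univ j0, key j0 hj0⟩
  intro j _
  by_cases h : π j = πstar j
  · rw [h]
  · exact le_of_lt (key j h)
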